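/- Let K be a field, A a unital K-algebra, and let F and F' be the symmetries associated to two direct sum decompositions of A into almost invariant subspaces, and suppose F − F' has finite rank. Let τ(a,b) = Tr(r_a ∘ [F, r_b]) and τ'(a,b) = Tr(r_a ∘ [F', r_b]). Then τ − τ' is a coboundary: writing φ(c) = Tr(r_c ∘ (F − F')), one has τ(a, b) − τ'(a, b) = φ(ab) − φ(ba) for all a, b ∈ A. -/

import Mathlib

/-- A subspace `V` of a `K`-algebra `A` is almost invariant if for every `x ∈ A`
the quotient `(V + Vx)/V` is finite-dimensional. -/
def AlmostInvariant (K : Type*) {A : Type*} [Field K] [Ring A] [Algebra K A]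
    (V : Submodule K A) : Prop :=
  ∀ x : A, FiniteDimensional K ((V.map (LinearMap.mulRight K x)).map V.mkQ)

/-- The trace of a finite-rank endomorphism `T`: the trace of the restriction of `T`
to its range. -/
noncomputable def trOf {K M : Type*} [Field K] [AddCommGroup M] [Module K M]
    (T : M →ₗ[K] M) : K :=
  LinearMap.trace K (LinearMap.range T)
    (T.restrict (fun x _ => LinearMap.mem_range_self T x))

section TraceAux

variable {K M : Type*} [Field K] [AddCommGroup M] [Module K M]

lemma trOf_eq_trace {U : Submodule K M} [FiniteDimensional K U]
    (T : M →ₗ[K] M) (h : LinearMap.range T ≤ U) :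
    trOf T = LinearMap.trace K U
      (T.restrict (fun x _ => h (LinearMap.mem_range_self T x))) := by
  haveI : FiniteDimensional K (LinearMap.range T) := Submodule.finiteDimensional_of_le h
  let a : U →ₗ[K] LinearMap.range T :=
    (T ∘ₗ U.subtype).codRestrict _ (fun x => LinearMap.mem_range_self T x.1)
  let b : (LinearMap.range T : Submodule K M) →ₗ[K] U := Submodule.inclusion h
  have h1 : T.restrict (fun x _ => LinearMap.mem_range_self T x) = a ∘ₗ b := by
    ext x; rfl
  have h2 : T.restrict (fun x _ => h (LinearMap.mem_range_self T x)) = b ∘ₗ a := by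
    ext x; rfl
  rw [trOf, h1, h2, LinearMap.trace_comp_comm']

lemma trOf_sub (S T : M →ₗ[K] M) [FiniteDimensional K (LinearMap.range S)]
    [FiniteDimensional K (LinearMap.range T)] : trOf (S - T) = trOf S - trOf T := by
  set U := LinearMap.range S ⊔ LinearMap.range T with hU
  have hS : LinearMap.range S ≤ U := le_sup_left
  have hT : LinearMap.range T ≤ U := le_sup_right
  have hST : LinearMap.range (S - T) ≤ U := by
    rintro x ⟨y, rfl⟩
    exact U.sub_mem (hS (LinearMap.mem_range_self S y)) (hT (LinearMap.mem_range_self T y))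
  rw [trOf_eq_trace (S - T) hST, trOf_eq_trace S hS, trOf_eq_trace T hT, ← map_sub]
  congr 1

lemma trOf_comp_comm (X g : M →ₗ[K] M) [FiniteDimensional K (LinearMap.range X)] :
    trOf (X ∘ₗ g) = trOf (g ∘ₗ X) := by
  set U := LinearMap.range X with hU
  set N := U.map g with hN
  haveI : FiniteDimensional K N := Module.Finite.map U g
  let f : U →ₗ[K] N := (g ∘ₗ U.subtype).codRestrict N (fun x => ⟨x.1, x.2, rfl⟩)
  let b : N →ₗ[K] U := (X ∘ₗ N.subtype).codRestrict U
    (fun x => LinearMap.mem_range_self X _)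
  have h1 : LinearMap.range (X ∘ₗ g) ≤ U := LinearMap.range_comp_le_range g X
  have h2 : LinearMap.range (g ∘ₗ X) ≤ N := by
    rw [LinearMap.range_comp]
  have e1 : (X ∘ₗ g).restrict (fun x _ => h1 (LinearMap.mem_range_self _ x)) = b ∘ₗ f := by
    ext x; rfl
  have e2 : (g ∘ₗ X).restrict (fun x _ => h2 (LinearMap.mem_range_self _ x)) = f ∘ₗ b := by
    ext x; rfl
  rw [trOf_eq_trace _ h1, trOf_eq_trace _ h2, e1, e2, LinearMap.trace_comp_comm']

end TraceAux

section Comm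

variable {K A : Type*} [Field K] [Ring A] [Algebra K A]

lemma comm_finrank (V W : Submodule K A) (hVW : IsCompl V W)
    (hV : AlmostInvariant K V) (hW : AlmostInvariant K W)
    (F : A →ₗ[K] A) (hFV : ∀ v ∈ V, F v = v) (hFW : ∀ w ∈ W, F w = -w) (b : A) :
    FiniteDimensional K (LinearMap.range
      (F ∘ₗ LinearMap.mulRight K b - LinearMap.mulRight K b ∘ₗ F)) := by
  set πV : A →ₗ[K] A := V.subtype ∘ₗ V.projectionOnto W hVW with hπV
  set πW : A →ₗ[K] A := W.subtype ∘ₗ W.projectionOnto V hVW.symm with hπW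
  have hsum : ∀ x : A, πV x + πW x = x := fun x =>
    Submodule.projection_add_projection_eq_self hVW x
  have hπVmem : ∀ x : A, πV x ∈ V := fun x => (V.projectionOnto W hVW x).2
  have hπWmem : ∀ x : A, πW x ∈ W := fun x => (W.projectionOnto V hVW.symm x).2
  have hF : ∀ x : A, F x = πV x - πW x := by
    intro x
    conv_lhs => rw [← hsum x]
    rw [map_add, hFV _ (hπVmem x), hFW _ (hπWmem x), ← sub_eq_add_neg]
  set S1 := (W.map (LinearMap.mulRight K b)).map πV with hS1
  set S2 := (V.map (LinearMap.mulRight K b)).map πW with hS2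
  have hWker : W ≤ LinearMap.ker πV := by
    intro w hw
    simp [hπV, LinearMap.mem_ker, Submodule.projectionOnto_apply_of_mem_right hVW hw]
  have hVker : V ≤ LinearMap.ker πW := by
    intro v hv
    simp [hπW, LinearMap.mem_ker,
      Submodule.projectionOnto_apply_of_mem_right hVW.symm hv]
  haveI : FiniteDimensional K S1 := by
    haveI := hW b
    have e : S1 = ((W.map (LinearMap.mulRight K b)).map W.mkQ).map (W.liftQ πV hWker) := by
      rw [← Submodule.map_comp, Submodule.liftQ_mkQ]
    rw [e]
    exact Module.Finite.map _ _
  haveI : FiniteDimensional K S2 := by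
    haveI := hV b
    have e : S2 = ((V.map (LinearMap.mulRight K b)).map V.mkQ).map (V.liftQ πW hVker) := by
      rw [← Submodule.map_comp, Submodule.liftQ_mkQ]
    rw [e]
    exact Module.Finite.map _ _
  have hrange : LinearMap.range
      (F ∘ₗ LinearMap.mulRight K b - LinearMap.mulRight K b ∘ₗ F) ≤ S1 ⊔ S2 := by
    rintro x ⟨y, rfl⟩
    have h1 : πW (πV y * b) = πV y * b - πV (πV y * b) := by
      rw [eq_sub_iff_add_eq, add_comm]; exact hsum _
    have h2 : πW (πW y * b) = πW y * b - πV (πW y * b) := by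
      rw [eq_sub_iff_add_eq, add_comm]; exact hsum _
    have hyb : y * b = πV y * b + πW y * b := by rw [← add_mul, hsum]
    have key : (F ∘ₗ LinearMap.mulRight K b - LinearMap.mulRight K b ∘ₗ F) y
        = (πV (πW y * b) - πW (πV y * b)) + (πV (πW y * b) - πW (πV y * b)) := by
      simp only [LinearMap.sub_apply, LinearMap.comp_apply, LinearMap.mulRight_apply,
        hF, hyb, map_add, sub_mul, h1, h2]
      abel
    rw [key]
    have m1 : πV (πW y * b) - πW (πV y * b) ∈ S1 ⊔ S2 := by
      refine Submodule.sub_mem _ (Submodule.mem_sup_left ?_) (Submodule.mem_sup_right ?_)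
      · exact ⟨πW y * b, ⟨πW y, hπWmem y, rfl⟩, rfl⟩
      · exact ⟨πV y * b, ⟨πV y, hπVmem y, rfl⟩, rfl⟩
    exact Submodule.add_mem _ m1 m1
  exact Submodule.finiteDimensional_of_le hrange

end Comm

/-- If `F` and `F'` are the symmetries associated to two decompositions of
`A` into almost invariant subspaces and `F - F'` has finite rank, then the cyclic
cocycles `τ(a,b) = Tr(r_a ∘ [F, r_b])` and `τ'(a,b) = Tr(r_a ∘ [F', r_b])` differ by
a coboundary: `τ(a,b) - τ'(a,b) = φ(ab) - φ(ba)` with `φ(c) = Tr(r_c ∘ (F - F'))`. -/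
theorem tau_difference_is_coboundary
    (K A : Type*) [Field K] [Ring A] [Algebra K A]
    (V W V' W' : Submodule K A) (hVW : IsCompl V W) (hVW' : IsCompl V' W')
    (hV : AlmostInvariant K V) (hW : AlmostInvariant K W)
    (hV' : AlmostInvariant K V') (hW' : AlmostInvariant K W')
    (F F' : A →ₗ[K] A)
    (hFV : ∀ v ∈ V, F v = v) (hFW : ∀ w ∈ W, F w = -w)
    (hFV' : ∀ v ∈ V', F' v = v) (hFW' : ∀ w ∈ W', F' w = -w)
    (hdiff : FiniteDimensional K (LinearMap.range (F - F')))
    (τ τ' : A → A → K) (φ : A → K)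
    (hτ : ∀ a b : A, τ a b = trOf (LinearMap.mulRight K a ∘ₗ
      (F ∘ₗ LinearMap.mulRight K b - LinearMap.mulRight K b ∘ₗ F)))
    (hτ' : ∀ a b : A, τ' a b = trOf (LinearMap.mulRight K a ∘ₗ
      (F' ∘ₗ LinearMap.mulRight K b - LinearMap.mulRight K b ∘ₗ F')))
    (hφ : ∀ c : A, φ c = trOf (LinearMap.mulRight K c ∘ₗ (F - F'))) :
    ∀ a b : A, τ a b - τ' a b = φ (a * b) - φ (b * a) := by
  intro a b
  set ra := LinearMap.mulRight K a with hra
  set rb := LinearMap.mulRight K b with hrb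
  set D := F - F' with hD
  set C := F ∘ₗ rb - rb ∘ₗ F with hC
  set C' := F' ∘ₗ rb - rb ∘ₗ F' with hC'
  haveI hCfd : FiniteDimensional K (LinearMap.range C) :=
    comm_finrank V W hVW hV hW F hFV hFW b
  haveI hC'fd : FiniteDimensional K (LinearMap.range C') :=
    comm_finrank V' W' hVW' hV' hW' F' hFV' hFW' b
  haveI : FiniteDimensional K (LinearMap.range D) := hdiff
  haveI : FiniteDimensional K (LinearMap.range (ra ∘ₗ C)) := by
    rw [LinearMap.range_comp]; exact Module.Finite.map _ _
  haveI : FiniteDimensional K (LinearMap.range (ra ∘ₗ C')) := by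
    rw [LinearMap.range_comp]; exact Module.Finite.map _ _
  haveI : FiniteDimensional K (LinearMap.range (ra ∘ₗ D)) := by
    rw [LinearMap.range_comp]; exact Module.Finite.map _ _
  haveI : FiniteDimensional K (LinearMap.range ((ra ∘ₗ D) ∘ₗ rb)) :=
    Submodule.finiteDimensional_of_le (LinearMap.range_comp_le_range _ _)
  haveI : FiniteDimensional K (LinearMap.range (LinearMap.mulRight K (b * a) ∘ₗ D)) := by
    rw [LinearMap.range_comp]; exact Module.Finite.map _ _
  haveI : FiniteDimensional K (LinearMap.range (LinearMap.mulRight K (a * b) ∘ₗ D)) := by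
    rw [LinearMap.range_comp]; exact Module.Finite.map _ _
  rw [hτ, hτ', hφ, hφ, ← trOf_sub]
  have keymap : ra ∘ₗ C - ra ∘ₗ C'
      = (ra ∘ₗ D) ∘ₗ rb - LinearMap.mulRight K (b * a) ∘ₗ D := by
    rw [hC, hC', hD, LinearMap.mulRight_mul, ← hra, ← hrb]
    simp only [LinearMap.sub_comp, LinearMap.comp_sub, LinearMap.comp_assoc]
    abel
  rw [keymap, trOf_sub, trOf_comp_comm (ra ∘ₗ D) rb]
  have e : rb ∘ₗ (ra ∘ₗ D) = LinearMap.mulRight K (a * b) ∘ₗ D := by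
    rw [LinearMap.mulRight_mul, ← hra, ← hrb, LinearMap.comp_assoc]
  rw [e]
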